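/- arXiv:1610.06908 — 6 statements merged into one kernel-verified Lean document; each statement's English description precedes it below -/
import Mathlib

section
/- For any n-diagram D over a signature Σ, any subdiagram S with embedding e : S ↪ D, rewriting D along e by replacing S with S itself yields a diagram equal to D; that is, D⟨e : S → S⟩ = D. -/
/-!
Data structures for quasistrict higher categories (Bar–Vicary).
A 0-diagram is a single generator; an (n+1)-diagram is a source n-diagram
together with a list of cells, each a generator name with embedding data.
Embedding data between n-diagrams is a list of n heights; composition of
embeddings adds heights at every level, and the lifted embedding `Λ(e,T)`
has the same data as `e`.
-/

namespace QS

inductive Diagram : Type where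
  | base (g : ℕ) : Diagram
  | step (s : Diagram) (c : List (ℕ × List ℕ)) : Diagram

namespace Diagram

/-- Dimension of a diagram. -/
def dim : Diagram → ℕ
  | base _ => 0
  | step s _ => s.dim + 1

/-- The source (n−1)-diagram of an n-diagram (junk at dimension 0). -/
def src : Diagram → Diagram
  | base g => base g
  | step s _ => s

/-- The list of cells: generator names with embedding data. -/
def cells : Diagram → List (ℕ × List ℕ)
  | base _ => []
  | step _ c => c

/-- The length `|D|` of a diagram. -/
def size : Diagram → ℕ
  | base _ => 1
  | step _ c => c.length

/-- The unique generator of a 0-diagram. -/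
def gen : Diagram → ℕ
  | base g => g
  | step _ _ => 0

end Diagram

/-- A signature assigns to each generator name of each dimension `k ≥ 1` a
source and a target (k−1)-diagram. -/
structure Signature where
  gsrc : ℕ → ℕ → Diagram
  gtgt : ℕ → ℕ → Diagram

/-- Data of the composite embedding `f ∘ e`: `(f ∘ e).h = e.h + f.h`
recursively at every level, i.e. pointwise addition of height data. -/
def embComp (f e : List ℕ) : List ℕ := List.zipWith (· + ·) f e

/-- Data of the lifted embedding `Λ(e, T) : T ↪ D⟨e : S → T⟩`: the same
height data as `e` (`Λ(e,T).h = e.h`, `Λ(e,T).e = e.e`). -/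
def liftEmb (e : List ℕ) (_T : Diagram) : List ℕ := e

/-- Data of the identity embedding on an n-diagram: height 0 at every level. -/
def idEmb (n : ℕ) : List ℕ := List.replicate n 0

/-- The rewrite `D⟨e : S → T⟩`: remove the copy of `S` embedded at height
`e.h` and insert `T`, with the embeddings of `T` composed with the lift of
`e.e`. -/
def rewriteDiag (D : Diagram) (e : List ℕ) (S T : Diagram) : Diagram :=
  match D with
  | .base _ => T
  | .step s c =>
      .step s (c.take (e.headD 0)
        ++ T.cells.map (fun x => (x.1, embComp (liftEmb e.tail T) x.2))
        ++ c.drop (e.headD 0 + S.cells.length))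

/-- The slice `D[i].d`, obtained by sequential rewriting from the source. -/
def slice (σ : Signature) (D : Diagram) : ℕ → Diagram
  | 0 => D.src
  | i + 1 =>
      rewriteDiag (slice σ D i) (D.cells.getD i default).2
        (σ.gsrc D.dim (D.cells.getD i default).1)
        (σ.gtgt D.dim (D.cells.getD i default).1)

/-- The target `D.t := D[|D|].d`. -/
def tgt (σ : Signature) (D : Diagram) : Diagram := slice σ D D.cells.length

/-- Iterated source `s^k`. -/
def srcIter : ℕ → Diagram → Diagram
  | 0, D => D
  | k + 1, D => srcIter k D.src

/-- Iterated target `t^k`. -/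
def tgtIter (σ : Signature) : ℕ → Diagram → Diagram
  | 0, D => D
  | k + 1, D => tgtIter σ k (tgt σ D)

/-- Well-definedness of an embedding `e : S ↪ D`: for 0-diagrams the unique
generators agree; otherwise the component embedding is well-defined, the
image is in range, and the generators and embeddings of `S` match those of
`D` at heights shifted by `e.h` (via the lift of `e.e`). -/
def wdEmb (σ : Signature) : List ℕ → Diagram → Diagram → Prop
  | e, .base g, D => e = [] ∧ D.gen = g
  | e, .step Ss Sc, D =>
      e.length = Ss.dim + 1 ∧
      e.headD 0 + Sc.length ≤ D.cells.length ∧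
      wdEmb σ e.tail Ss (slice σ D (e.headD 0)) ∧
      ∀ i < Sc.length,
        (Sc.getD i default).1 = (D.cells.getD (i + e.headD 0) default).1 ∧
        embComp e.tail (Sc.getD i default).2
          = (D.cells.getD (i + e.headD 0) default).2

/-- Auxiliary well-definedness predicate for diagrams, by dimension. -/
def wdAux (σ : Signature) : ℕ → Diagram → Prop
  | 0, _ => True
  | n + 1, D =>
      wdAux σ n D.src ∧
      ∀ i < D.cells.length,
        wdEmb σ (D.cells.getD i default).2
          (σ.gsrc (n + 1) (D.cells.getD i default).1) (slice σ D i) ∧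
        wdAux σ n (slice σ D (i + 1))

/-- Well-definedness of a diagram: the source is well-defined and every
slice exists and is well-defined. -/
def wdDiagram (σ : Signature) (D : Diagram) : Prop := wdAux σ D.dim D

/-- Two n-diagrams are globular when n = 0, or they have equal sources and
equal targets. -/
def globular (σ : Signature) (S T : Diagram) : Prop :=
  match S with
  | .base _ => True
  | .step _ _ => S.src = T.src ∧ tgt σ S = tgt σ T

/-- Vertical composite of two n-diagrams (`S` below `D`): the source of `S`
together with the concatenated cell lists. -/
def vcomp (S D : Diagram) : Diagram :=
  match S with
  | .base g => .base g
  | .step s c => .step s (c ++ D.cells)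

/-- Data of the inclusion embedding `inc(S, D) : D ↪ S ∘ D` of an n-diagram
`D` into its composite with an m-diagram `S` of size `sLen`, `m ≤ n`. -/
def incData (m sLen : ℕ) : ℕ → List ℕ
  | 0 => []
  | k + 1 => if m = k + 1 then sLen :: List.replicate k 0
             else 0 :: incData m sLen k

/-- Composite `S ∘ D` where `S` has dimension ≤ that of `D`: `S` is attached
on the source side of the shared boundary, so the embeddings of the cells of
`D` are composed with the inclusion embeddings. -/
def compL (S D : Diagram) : Diagram :=
  match D with
  | .base g => .base g
  | .step s c =>
      if S.dim = s.dim + 1 then vcomp S D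
      else .step (compL S s)
        (c.map fun x => (x.1, embComp (incData S.dim S.size s.dim) x.2))

/-- Composite `D ∘ X` where `X` has dimension ≤ that of `D`: `X` is attached
on the target side of the shared boundary, so the cell data of `D` is
unchanged and only the deep source changes. -/
def compR (D X : Diagram) : Diagram :=
  match D with
  | .base g => .base g
  | .step s c =>
      if X.dim = s.dim + 1 then vcomp D X
      else .step (compR s X) c

/-- The composite `X ∘ Y` of two diagrams along their unique common
boundary, determined by their dimensions. -/
def comp (X Y : Diagram) : Diagram :=
  if X.dim ≤ Y.dim then compL X Y else compR X Y

/-- The identity (n+1)-diagram on an n-diagram: source `D`, no cells. -/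
def idDiag (D : Diagram) : Diagram := .step D []

/-- Composability of `X ∘ Y`: the matching condition on iterated
sources/targets along the shared boundary. -/
def composable (σ : Signature) (X Y : Diagram) : Prop :=
  if X.dim ≤ Y.dim then tgt σ X = srcIter (Y.dim - X.dim + 1) Y
  else tgtIter σ (X.dim - Y.dim + 1) X = Y.src

/-- **Identity rewrites.**  For any n-diagram `D` over a signature `σ`, any
subdiagram `S` with embedding `e : S ↪ D`, rewriting `D` along `e` by
replacing `S` with `S` itself yields a diagram equal to `D`:
`D⟨e : S → S⟩ = D`. -/
theorem rewriteDiag_self (σ : Signature) (D S : Diagram) (e : List ℕ)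
    (hdim : S.dim = D.dim)
    (hD : wdDiagram σ D) (hS : wdDiagram σ S)
    (he : wdEmb σ e S D) :
    rewriteDiag D e S S = D := by
  cases D with
  | base g =>
    cases S with
    | base g' =>
      obtain ⟨-, hg⟩ := he
      simp only [Diagram.gen] at hg
      simp [rewriteDiag, hg]
    | step Ss Sc => simp [Diagram.dim] at hdim
  | step s c =>
    cases S with
    | base g' => simp [Diagram.dim] at hdim
    | step Ss Sc =>
      obtain ⟨hlen, hle, hwd, hmatch⟩ := he
      simp only [Diagram.cells] at hle hmatch ⊢
      set h := e.headD 0 with hh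
      simp only [rewriteDiag, Diagram.cells, liftEmb]
      rw [← hh]
      congr 1
      have hmap : Sc.map (fun x => (x.1, embComp e.tail x.2))
          = (c.drop h).take Sc.length := by
        apply List.ext_getElem
        · simp only [List.length_map, List.length_take, List.length_drop]
          omega
        · intro i h1 h2
          simp only [List.length_map] at h1
          have hic : h + i < c.length := by omega
          have := hmatch i h1
          rw [List.getD_eq_getElem Sc default h1,
            List.getD_eq_getElem c default (by omega : i + h < c.length)] at this
          simp only [List.getElem_map, List.getElem_take, List.getElem_drop]
          obtain ⟨h1', h2'⟩ := this
          have hidx : (c)[h + i]'hic = (c)[i + h]'(by omega) := by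
            congr 1
            omega
          rw [hidx]
          exact Prod.ext h1' h2'
      rw [hmap]
      have hsplit : (c.drop h).take Sc.length ++ c.drop (h + Sc.length)
          = c.drop h := by
        rw [← List.drop_drop, List.take_append_drop]
      rw [List.append_assoc, hsplit, List.take_append_drop]

end QS
end

section
/- Given well-defined globular n-diagrams S, T and a well-defined embedding e : S ↪ A into a well-defined n-diagram A, the lifted embedding Λ(e, T) : T ↪ A⟨e : S → T⟩, defined by Λ(e,T).h = e.h and Λ(e,T).e = e.e, is a well-defined embedding. -/
/-!
Data structures for quasistrict higher categories (Bar–Vicary).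
A 0-diagram is a single generator; an (n+1)-diagram is a source n-diagram
together with a list of cells, each a generator name with embedding data.
Embedding data between n-diagrams is a list of n heights; composition of
embeddings adds heights at every level, and the lifted embedding `Λ(e,T)`
has the same data as `e`.
-/

namespace QS

theorem slice_congr (σ : Signature) (D D' : Diagram) (hsrc : D.src = D'.src)
    (hdim : D.dim = D'.dim) :
    ∀ i, (∀ j, j < i → D.cells.getD j default = D'.cells.getD j default) →
      slice σ D i = slice σ D' i
  | 0, _ => by simp [slice, hsrc]
  | i + 1, h => by
      have ih := slice_congr σ D D' hsrc hdim i (fun j hj => h j (Nat.lt_succ_of_lt hj))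
      simp only [slice, ih, h i (Nat.lt_succ_self i), hdim]

theorem getD_map_pair (l : List (ℕ × List ℕ)) (f : (ℕ × List ℕ) → (ℕ × List ℕ))
    (i : ℕ) (h : i < l.length) (d : ℕ × List ℕ) :
    (l.map f).getD i d = f (l.getD i d) := by
  simp [List.getD_eq_getElem?_getD, List.getElem?_map, h, List.getElem?_eq_getElem]

theorem getD_take (l : List (ℕ × List ℕ)) (i n : ℕ) (h : i < n) (d : ℕ × List ℕ) :
    (l.take n).getD i d = l.getD i d := by
  simp [List.getD_eq_getElem?_getD, List.getElem?_take, h]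

/-- **Well-defined lifts.**  Given well-defined globular n-diagrams `S, T` and
a well-defined embedding `e : S ↪ A` into a well-defined n-diagram `A`, the
lifted embedding `Λ(e, T) : T ↪ A⟨e : S → T⟩`, defined by `Λ(e,T).h = e.h`
and `Λ(e,T).e = e.e`, is a well-defined embedding. -/
theorem wd_liftEmb (σ : Signature) (S T A : Diagram) (e : List ℕ)
    (hSdim : S.dim = A.dim) (hTdim : T.dim = A.dim)
    (hS : wdDiagram σ S) (hT : wdDiagram σ T) (hA : wdDiagram σ A)
    (hglob : globular σ S T) (he : wdEmb σ e S A) :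
    wdEmb σ (liftEmb e T) T (rewriteDiag A e S T) := by
  cases T with
  | base g =>
      cases A with
      | base gA =>
          cases S with
          | base gS => exact ⟨he.1, rfl⟩
          | step Ss Sc => simp [Diagram.dim] at hSdim
      | step As Ac => simp [Diagram.dim] at hTdim
  | step Ts Tc =>
      cases A with
      | base gA => simp [Diagram.dim] at hTdim
      | step As Ac =>
          cases S with
          | base gS => simp [Diagram.dim] at hSdim
          | step Ss Sc =>
              obtain ⟨hlen, hle, hsrc, hcells⟩ := he
              have hST : Ss = Ts := hglob.1
              set h0 := e.headD 0 with hh0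
              have hh0le : h0 ≤ Ac.length := by
                calc h0 ≤ h0 + Sc.length := Nat.le_add_right _ _
                _ ≤ Ac.length := hle
              -- the rewritten diagram
              set D' : Diagram := rewriteDiag (.step As Ac) e (.step Ss Sc) (.step Ts Tc)
                with hD'
              have hcellsD' : D'.cells = Ac.take h0
                  ++ (Tc.map (fun x => (x.1, embComp e.tail x.2))
                  ++ Ac.drop (h0 + Sc.length)) := by
                simp [hD', rewriteDiag, Diagram.cells, liftEmb, List.append_assoc, ← List.headD_eq_head?_getD, ← hh0]
              have htakelen : (Ac.take h0).length = h0 := by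
                simp [List.length_take, Nat.min_eq_left hh0le]
              -- getD facts
              have hget_low : ∀ j, j < h0 →
                  D'.cells.getD j default = Ac.getD j default := by
                intro j hj
                rw [hcellsD', List.getD_append _ _ _ _ (by omega),
                  getD_take _ _ _ hj]
              have hget_mid : ∀ i, i < Tc.length →
                  D'.cells.getD (i + h0) default
                    = ((Tc.getD i default).1, embComp e.tail (Tc.getD i default).2) := by
                intro i hi
                rw [hcellsD', List.getD_append_right _ _ _ _ (by omega), htakelen,
                  List.getD_append _ _ _ _ (by simpa using (by omega : i + h0 - h0 < Tc.length)),
                  show i + h0 - h0 = i by omega,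
                  getD_map_pair _ _ _ hi]
              refine ⟨?_, ?_, ?_, ?_⟩
              · simpa [liftEmb, hST] using hlen
              · have : D'.cells.length = h0 + Tc.length + (Ac.length - (h0 + Sc.length)) := by
                  rw [hcellsD']
                  simp [htakelen, List.length_drop]
                  omega
                simp only [liftEmb, ← hh0, this]
                omega
              · have hslice : slice σ D' h0 = slice σ (.step As Ac) h0 := by
                  apply slice_congr σ D' (.step As Ac)
                  · simp [hD', rewriteDiag, Diagram.src]
                  · simp [hD', rewriteDiag, Diagram.dim]
                  · intro j hj; exact hget_low j hj
                rw [show (liftEmb e (.step Ts Tc)) = e from rfl, hslice, ← hST]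
                exact hsrc
              · intro i hi
                rw [show (liftEmb e (.step Ts Tc)) = e from rfl]
                have := hget_mid i hi
                simp only [Diagram.cells] at this ⊢
                rw [← hh0, this]
                exact ⟨rfl, rfl⟩

end QS
end

section
/- Composite lifts: for well-defined n-diagrams S, T, A, B, C with S, T globular and A, C globular, and well-defined embeddings e : S ↪ A and f : C ↪ B, the lift of the composite equals the composite of the lifts: Λ(Λ(f,A) ∘ e, T) = Λ(f, A⟨e : S → T⟩) ∘ Λ(e, T). -/
/-!
Data structures for quasistrict higher categories (Bar–Vicary).
A 0-diagram is a single generator; an (n+1)-diagram is a source n-diagram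
together with a list of cells, each a generator name with embedding data.
Embedding data between n-diagrams is a list of n heights; composition of
embeddings adds heights at every level, and the lifted embedding `Λ(e,T)`
has the same data as `e`.
-/

namespace QS

/-!
Both sides only splice cell lists. Rewriting `B` along `f` splices the cells of `A` into those of
`B` at height `f.h`, so the relocated copy of `S` sits at height `f.h + e.h` inside that block:
splicing `T` there is the same as first splicing `T` into `A` and then splicing the result into
`B`. The embedding data of the cells of `T` is shifted once by `e.e` and once by `f.e`, which
agrees with the composite shift by associativity of pointwise addition.
-/

def splice {α : Type*} (L : List α) (i l : ℕ) (M : List α) : List α :=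
  L.take i ++ M ++ L.drop (i + l)

theorem splice_splice {α : Type*} (L N M : List α) {i m a l : ℕ}
    (hi : i ≤ L.length) (hal : a + l ≤ N.length) :
    splice (splice L i m N) (i + a) l M = splice L i m (splice N a l M) := by
  have hlen : (L.take i).length = i := List.length_take_of_le hi
  simp only [splice, List.append_assoc, List.take_append, List.drop_append, hlen,
    Nat.add_sub_cancel_left, List.take_take, List.drop_drop]
  have h1 : a - N.length = 0 := by omega
  have h2 : i + a + l - i - N.length = 0 := by omega
  rw [Nat.min_eq_right (by omega), h1, h2, List.drop_of_length_le (l := L.take i) (by omega),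
    show i + a + l - i = a + l by omega]
  simp

theorem map_splice {α β : Type*} (g : α → β) (L M : List α) (i l : ℕ) :
    (splice L i l M).map g = splice (L.map g) i l (M.map g) := by
  simp only [splice, List.map_append, List.map_take, List.map_drop]

theorem embComp_assoc (f e x : List ℕ) :
    embComp f (embComp e x) = embComp (embComp f e) x := by
  simp only [embComp, List.zipWith_zipWith_left, List.zipWith_zipWith_right, Nat.add_assoc]

theorem embComp_cons_cons (b a : ℕ) (f e : List ℕ) :
    embComp (b :: f) (a :: e) = (b + a) :: embComp f e := rfl

theorem rewriteDiag_step (s : Diagram) (c : List (ℕ × List ℕ)) (e : List ℕ) (S T : Diagram) :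
    rewriteDiag (.step s c) e S T
      = .step s (splice c (e.headD 0) S.cells.length
          (T.cells.map fun x => (x.1, embComp e.tail x.2))) := rfl

namespace wdEmb

variable {σ : Signature} {e : List ℕ} {S D : Diagram}

theorem headD_add_length_le (he : wdEmb σ e S D) :
    e.headD 0 + S.cells.length ≤ D.cells.length := by
  cases S with
  | base g => simp [he.1, Diagram.cells]
  | step Ss Sc => exact he.2.1

theorem ne_nil_of_step {Ss : Diagram} {Sc : List (ℕ × List ℕ)}
    (he : wdEmb σ e (.step Ss Sc) D) : e ≠ [] := by
  rintro rfl
  simp [wdEmb] at he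

end wdEmb

theorem rewriteDiag_step_rewriteDiag_step (Bs As C S T : Diagram)
    (Bc Ac : List (ℕ × List ℕ)) (a b : ℕ) (e f : List ℕ)
    (ha : a + S.cells.length ≤ Ac.length) (hb : b ≤ Bc.length) :
    rewriteDiag (rewriteDiag (.step Bs Bc) (b :: f) C (.step As Ac))
        (embComp (b :: f) (a :: e)) S T
      = rewriteDiag (.step Bs Bc) (b :: f) C (rewriteDiag (.step As Ac) (a :: e) S T) := by
  simp only [rewriteDiag_step, embComp_cons_cons, List.headD_cons, List.tail_cons,
    Diagram.cells.eq_2]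
  rw [splice_splice _ _ _ hb (by simpa using ha), map_splice, List.map_map]
  simp only [Function.comp_def, embComp_assoc]

theorem liftEmb_comp_general (σ : Signature) (S T A B C : Diagram) (e f : List ℕ)
    (hSdim : S.dim = A.dim)
    (hBdim : B.dim = A.dim) (hCdim : C.dim = A.dim)
    (he : wdEmb σ e S A) (hf : wdEmb σ f C B) :
    rewriteDiag (rewriteDiag B f C A) (embComp (liftEmb f A) e) S T
        = rewriteDiag B f C (rewriteDiag A e S T) ∧
      liftEmb (embComp (liftEmb f A) e) T
        = embComp (liftEmb f (rewriteDiag A e S T)) (liftEmb e T) := by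
  refine ⟨?_, rfl⟩
  match A, B, S, C, hBdim, hSdim, hCdim with
  | .base _, .base _, _, _, _, _, _ => rfl
  | .step As Ac, .step Bs Bc, .step Ss Sc, .step Cs Cc, _, _, _ =>
    obtain ⟨a, e, rfl⟩ := List.exists_cons_of_ne_nil he.ne_nil_of_step
    obtain ⟨b, f, rfl⟩ := List.exists_cons_of_ne_nil hf.ne_nil_of_step
    exact rewriteDiag_step_rewriteDiag_step Bs As _ _ T Bc Ac a b e f
      he.headD_add_length_le ((Nat.le_add_right _ _).trans hf.headD_add_length_le)

/-- **Composite lifts.**  For well-defined n-diagrams `S, T, A, B, C` with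
`S, T` globular and `A, C` globular, and well-defined embeddings `e : S ↪ A`
and `f : C ↪ B`, the lift of the composite equals the composite of the
lifts: `Λ(Λ(f,A) ∘ e, T) = Λ(f, A⟨e : S → T⟩) ∘ Λ(e, T)`.  (Equivalence of
embeddings is componentwise: the codomains agree and the height data
agrees.) -/
theorem liftEmb_comp (σ : Signature) (S T A B C : Diagram) (e f : List ℕ)
    (hSdim : S.dim = A.dim) (hTdim : T.dim = A.dim)
    (hBdim : B.dim = A.dim) (hCdim : C.dim = A.dim)
    (hS : wdDiagram σ S) (hT : wdDiagram σ T) (hA : wdDiagram σ A)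
    (hB : wdDiagram σ B) (hC : wdDiagram σ C)
    (hST : globular σ S T) (hAC : globular σ A C)
    (he : wdEmb σ e S A) (hf : wdEmb σ f C B) :
    rewriteDiag (rewriteDiag B f C A) (embComp (liftEmb f A) e) S T
        = rewriteDiag B f C (rewriteDiag A e S T) ∧
      liftEmb (embComp (liftEmb f A) e) T
        = embComp (liftEmb f (rewriteDiag A e S T)) (liftEmb e T) :=
  liftEmb_comp_general σ S T A B C e f hSdim hBdim hCdim he hf

end QS
end

section
/- Vertical composition of diagrams is given by concatenation of slices: for well-defined n-diagrams S, D with S.t = D.s, the j-th slice of S ∘ D equals S[j].d for 0 ≤ j ≤ |S|, and equals D[j − |S|].d for |S| ≤ j ≤ |S| + |D|. -/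
/-!
Data structures for quasistrict higher categories (Bar–Vicary).
A 0-diagram is a single generator; an (n+1)-diagram is a source n-diagram
together with a list of cells, each a generator name with embedding data.
Embedding data between n-diagrams is a list of n heights; composition of
embeddings adds heights at every level, and the lifted embedding `Λ(e,T)`
has the same data as `e`.
-/

namespace QS

/-- **Slices of a vertical composite.**  For well-defined n-diagrams `S, D`
with `S.t = D.s`, the j-th slice of `S ∘ D` equals `S[j].d` for
`0 ≤ j ≤ |S|`, and equals `D[j − |S|].d` for `|S| ≤ j ≤ |S| + |D|`. -/
theorem slice_vcomp (σ : Signature) (S D : Diagram)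
    (hdim : S.dim = D.dim) (h0 : 0 < D.dim)
    (hS : wdDiagram σ S) (hD : wdDiagram σ D)
    (hcomp : tgt σ S = D.src) :
    ∀ j : ℕ,
      (j ≤ S.cells.length → slice σ (vcomp S D) j = slice σ S j) ∧
      (S.cells.length ≤ j → j ≤ S.cells.length + D.cells.length →
        slice σ (vcomp S D) j = slice σ D (j - S.cells.length)) := by
  cases S with
  | base g => simp [Diagram.dim] at hdim; omega
  | step s c =>
    cases D with
    | base g' => simp [Diagram.dim] at h0
    | step ds dc =>
      have hdimeq : s.dim = ds.dim := by
        simpa [Diagram.dim] using hdim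
      have hA : ∀ j, j ≤ c.length → slice σ (vcomp (.step s c) (.step ds dc)) j = slice σ (.step s c) j := by
        intro j
        induction j with
        | zero => intro _; rfl
        | succ n ih =>
          intro hn
          have hn' : n < c.length := hn
          simp only [vcomp, Diagram.cells, slice]
          rw [show slice σ (Diagram.step s (c ++ dc)) n = slice σ (Diagram.step s c) n from ih (le_of_lt hn')]
          rw [List.getD_append _ _ _ _ hn']
          simp [Diagram.dim]
      have hB : ∀ k, slice σ (vcomp (.step s c) (.step ds dc)) (c.length + k) = slice σ (Diagram.step ds dc) k := by
        intro k
        induction k with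
        | zero =>
          simp only [Nat.add_zero]
          rw [hA c.length le_rfl]
          have : slice σ (Diagram.step s c) c.length = tgt σ (Diagram.step s c) := rfl
          rw [this, hcomp]
          rfl
        | succ n ih =>
          have : c.length + (n + 1) = (c.length + n) + 1 := by omega
          rw [this]
          simp only [vcomp, Diagram.cells, slice]
          rw [show (vcomp (Diagram.step s c) (Diagram.step ds dc)) = Diagram.step s (c ++ dc) from rfl] at ih
          rw [ih]
          rw [List.getD_append_right _ _ _ _ (by omega)]
          rw [show c.length + n - c.length = n by omega]
          simp [Diagram.dim, hdimeq]
      intro j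
      constructor
      · exact hA j
      · intro h1 h2
        obtain ⟨k, rfl⟩ := Nat.exists_eq_add_of_le h1
        have : (Diagram.step s c).cells.length + k - (Diagram.step s c).cells.length = k := by omega
        rw [this]
        exact hB k


end QS
end

section
/- Identity diagrams are compatible with whiskering: for a well-defined n-diagram D and well-defined m-diagram S with m, n > 0, if S = s^{n−m+1}(D) then S ∘ id(D) = id(S ∘ D), and if t^{m−n+1}(S) = D then id(S) ∘ D = id(S ∘ D). -/
/-!
Data structures for quasistrict higher categories (Bar–Vicary).
A 0-diagram is a single generator; an (n+1)-diagram is a source n-diagram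
together with a list of cells, each a generator name with embedding data.
Embedding data between n-diagrams is a list of n heights; composition of
embeddings adds heights at every level, and the lifted embedding `Λ(e,T)`
has the same data as `e`.
-/

namespace QS

theorem dim_idDiag (D : Diagram) : (idDiag D).dim = D.dim + 1 := rfl

theorem compL_idDiag {S D : Diagram} (h : S.dim ≤ D.dim) :
    compL S (idDiag D) = idDiag (compL S D) := by
  rw [idDiag, compL, if_neg (by omega)]
  rfl

theorem compR_idDiag {S D : Diagram} (h : D.dim ≤ S.dim) :
    compR (idDiag S) D = idDiag (compR S D) := by
  rw [idDiag, compR, if_neg (by omega)]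
  rfl

/-- At dimension 0 the two composites differ: `compL` keeps the generator of `D`, `compR` that
of `S`. -/
theorem compR_eq_compL_of_dim_eq {S D : Diagram} (hS : 0 < S.dim) (h : S.dim = D.dim) :
    compR S D = compL S D := by
  cases S with
  | base => exact absurd hS (lt_irrefl 0)
  | step s c =>
    cases D with
    | base => exact absurd h (Nat.succ_ne_zero _)
    | step t d =>
      have hst : s.dim = t.dim := Nat.succ.inj h
      rw [compR, if_pos (by simp only [Diagram.dim, hst]), compL,
        if_pos (by simp only [Diagram.dim, hst])]

theorem comp_idDiag_right {S D : Diagram} (h : S.dim ≤ D.dim) :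
    comp S (idDiag D) = idDiag (comp S D) := by
  rw [comp, if_pos (by rw [dim_idDiag]; omega), compL_idDiag h, comp, if_pos h]

theorem comp_idDiag_left {S D : Diagram} (hS : 0 < S.dim) (h : D.dim ≤ S.dim) :
    comp (idDiag S) D = idDiag (comp S D) := by
  rw [comp, if_neg (by rw [dim_idDiag]; omega), compR_idDiag h, comp]
  split_ifs with hSD
  · rw [compR_eq_compL_of_dim_eq hS (le_antisymm hSD h)]
  · rfl

theorem idDiag_comp_general (σ : Signature) (D S : Diagram)
    (hm : 0 < S.dim) :
    (S.dim ≤ D.dim → tgt σ S = srcIter (D.dim - S.dim + 1) D →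
      comp S (idDiag D) = idDiag (comp S D)) ∧
    (D.dim ≤ S.dim → tgtIter σ (S.dim - D.dim + 1) S = D.src →
      comp (idDiag S) D = idDiag (comp S D)) :=
  ⟨fun h _ => comp_idDiag_right h, fun h _ => comp_idDiag_left hm h⟩

/-- **Identity diagrams are compatible with whiskering.**  For a well-defined
n-diagram `D` and well-defined m-diagram `S` with `m, n > 0`: if `m ≤ n` and
the composability condition `S.t = s^{n−m+1}(D)` holds then
`S ∘ id(D) = id(S ∘ D)`; and if `n ≤ m` and `t^{m−n+1}(S) = D.s` then
`id(S) ∘ D = id(S ∘ D)`. -/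
theorem idDiag_comp (σ : Signature) (D S : Diagram)
    (hm : 0 < S.dim) (hn : 0 < D.dim)
    (hD : wdDiagram σ D) (hS : wdDiagram σ S) :
    (S.dim ≤ D.dim → tgt σ S = srcIter (D.dim - S.dim + 1) D →
      comp S (idDiag D) = idDiag (comp S D)) ∧
    (D.dim ≤ S.dim → tgtIter σ (S.dim - D.dim + 1) S = D.src →
      comp (idDiag S) D = idDiag (comp S D)) :=
  idDiag_comp_general σ D S hm

end QS
end

section
/- Associativity of diagram composition with a higher-dimensional diagram: for well-defined n-diagrams D, S and a well-defined l-diagram M with l > n > 0, such that the composites exist, S∘(D∘M) = (S∘D)∘M. -/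
/-!
Data structures for quasistrict higher categories (Bar–Vicary).
A 0-diagram is a single generator; an (n+1)-diagram is a source n-diagram
together with a list of cells, each a generator name with embedding data.
Embedding data between n-diagrams is a list of n heights; composition of
embeddings adds heights at every level, and the lifted embedding `Λ(e,T)`
has the same data as `e`.
-/

namespace QS

/-!
In the equidimensional case composition is concatenation of cell lists, which is associative.
Otherwise the higher-dimensional diagram `M` keeps its cells and only their embedding data changes:
`S ∘ (D ∘ M)` shifts it first by `inc(D, M)` and then by `inc(S, D ∘ M)`, while `(S ∘ D) ∘ M` shifts
it once by `inc(S ∘ D, M)`. Both shifts sit at the level of the shared boundary, where the heights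
`|D|` and `|S|` add up to `|S ∘ D|`, so the two composites agree.
-/

open Diagram

lemma embComp_assoc_s17 : ∀ a b v : List ℕ,
    embComp a (embComp b v) = embComp (embComp a b) v
  | [], _, _ => rfl
  | _ :: _, [], _ => rfl
  | _ :: _, _ :: _, [] => rfl
  | x :: a, y :: b, z :: v => by
    simp only [embComp, List.zipWith_cons_cons, Nat.add_assoc, List.cons.injEq, true_and]
    exact embComp_assoc_s17 a b v

lemma embComp_incData (m a b : ℕ) :
    ∀ k, embComp (incData m a k) (incData m b k) = incData m (a + b) k
  | 0 => rfl
  | k + 1 => by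
    by_cases h : m = k + 1
    · simp [embComp, incData, h]
    · simp only [embComp, incData, if_neg h, List.zipWith_cons_cons, Nat.add_zero, List.cons.injEq,
        true_and]
      exact embComp_incData m a b k

lemma dim_vcomp (S D : Diagram) : (vcomp S D).dim = S.dim := by
  cases S <;> rfl

lemma size_vcomp {S D : Diagram} (hS : 0 < S.dim) (hD : 0 < D.dim) :
    (vcomp S D).size = S.size + D.size := by
  cases S <;> cases D <;> simp_all [vcomp, dim, size, cells]

lemma vcomp_assoc (S : Diagram) {D : Diagram} (hD : 0 < D.dim) (M : Diagram) :
    vcomp (vcomp S D) M = vcomp S (vcomp D M) := by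
  cases S <;> cases D <;> simp_all [vcomp, dim, cells]

lemma compL_eq_vcomp {S D : Diagram} (hdim : S.dim = D.dim) (h0 : 0 < D.dim) :
    compL S D = vcomp S D := by
  cases D with
  | base => simp [dim] at h0
  | step s c => exact if_pos hdim

lemma dim_compL {S : Diagram} : ∀ {D : Diagram}, S.dim ≤ D.dim → (compL S D).dim = D.dim
  | .base _, _ => rfl
  | .step s c, h => by
    by_cases hs : S.dim = s.dim + 1
    · rw [compL_eq_vcomp (D := step s c) hs (Nat.succ_pos _), dim_vcomp, hs]
      rfl
    · have hle : S.dim ≤ s.dim := by simp only [dim] at h; omega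
      simp only [compL, if_neg hs, dim, dim_compL hle]

lemma comp_eq_compL {X Y : Diagram} (h : X.dim ≤ Y.dim) : comp X Y = compL X Y :=
  if_pos h

lemma compL_compL {S D : Diagram} (hdim : S.dim = D.dim) (h0 : 0 < D.dim) :
    ∀ {M : Diagram}, D.dim ≤ M.dim → compL S (compL D M) = compL (vcomp S D) M
  | .base _, h => by simp [dim] at h; omega
  | .step m c, h => by
    have hV : (vcomp S D).dim = D.dim := (dim_vcomp S D).trans hdim
    by_cases hm : D.dim = m.dim + 1
    · rw [compL_eq_vcomp (D := step m c) hm (Nat.succ_pos _),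
        compL_eq_vcomp (D := step m c) (hV.trans hm) (Nat.succ_pos _),
        compL_eq_vcomp (hdim.trans (dim_vcomp D _).symm) (dim_vcomp D _ ▸ h0),
        vcomp_assoc S h0]
    · have hle : D.dim ≤ m.dim := by simp only [dim] at h; omega
      have hS : S.dim ≠ m.dim + 1 := hdim ▸ hm
      simp only [compL, if_neg hm, if_neg hS, hV, dim_compL hle, List.map_map]
      congr 1
      · exact compL_compL hdim h0 hle
      · refine List.map_congr_left fun x _ => ?_
        simp only [Function.comp, embComp_assoc_s17, hdim, embComp_incData,
          size_vcomp (hdim ▸ h0) h0]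

theorem comp_assoc_general (D S M : Diagram)
    (hdim : S.dim = D.dim) (h0 : 0 < D.dim) (hl : D.dim < M.dim) :
    comp S (comp D M) = comp (comp S D) M := by
  have hDM : D.dim ≤ M.dim := hl.le
  have hSM : S.dim ≤ M.dim := hdim ▸ hDM
  rw [comp_eq_compL hDM, comp_eq_compL (dim_compL hDM ▸ hSM), comp_eq_compL hdim.le,
    compL_eq_vcomp hdim h0, comp_eq_compL ((dim_vcomp S D).symm ▸ hSM)]
  exact compL_compL hdim h0 hDM

/-- **Associative diagram composition.**  For well-defined n-diagrams `D, S`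
and a well-defined l-diagram `M` with `l > n > 0`, such that the composites
exist, `S ∘ (D ∘ M) = (S ∘ D) ∘ M`. -/
theorem comp_assoc (σ : Signature) (D S M : Diagram)
    (hdim : S.dim = D.dim) (h0 : 0 < D.dim) (hl : D.dim < M.dim)
    (hD : wdDiagram σ D) (hS : wdDiagram σ S) (hM : wdDiagram σ M)
    (hSD : tgt σ S = D.src)
    (hDM : tgt σ D = srcIter (M.dim - D.dim + 1) M) :
    comp S (comp D M) = comp (comp S D) M :=
  comp_assoc_general D S M hdim h0 hl

end QS
end
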